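/- Let $\vartheta$ be the random substitution on $\{a,b,c\}$ with $\vartheta(a) = \{ab, ac\}$ and $\vartheta(b) = \vartheta(c) = \{a\}$. Then for all $n \geq 1$, the number of level-$n$ inflation words of type $a$ satisfies $\#\vartheta^n(a) = 2^{F_n}$, where $F_n$ is the $n$-th Fibonacci number ($F_0 = 0$, $F_1 = 1$). -/

import Mathlib

def substW {A : Type*} [DecidableEq A] (θ : A → Finset (List A)) : List A → Finset (List A)
  | [] => {[]}
  | a :: u => (θ a).biUnion fun v => (substW θ u).image fun w => v ++ w

def substIter {A : Type*} [DecidableEq A] (θ : A → Finset (List A)) : ℕ → List A → Finset (List A)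
  | 0, u => {u}
  | n + 1, u => (substW θ u).biUnion (substIter θ n)

inductive ABC | a | b | c
deriving DecidableEq

open ABC

def ϑ : ABC → Finset (List ABC)
  | a => {[a, b], [a, c]}
  | b => {[a]}
  | c => {[a]}

/-!
For `n ≥ 1` both `ϑⁿ(b)` and `ϑⁿ(c)` equal `ϑⁿ⁻¹(a)`, so `ϑⁿ⁺²(a) = ϑⁿ⁺¹(ab) ∪ ϑⁿ⁺¹(ac) = ϑⁿ⁺¹(ab)`
is the set of concatenations of words of `ϑⁿ⁺¹(a)` with words of `ϑⁿ(a)`. Identifying `b` with `c`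
maps every realisation of `ϑ` to the Fibonacci substitution `a ↦ ab, b ↦ a`, so all words of
`ϑⁿ⁺¹(a)` have the same length and concatenation is injective. Hence
`#ϑⁿ⁺²(a) = #ϑⁿ⁺¹(a) · #ϑⁿ(a)`, and `log₂ #ϑⁿ(a)` obeys the Fibonacci recursion.
-/

open Finset

lemma card_image₂_append_of_length_eq {A : Type*} [DecidableEq A] {S T : Finset (List A)}
    (hS : ∀ v ∈ S, ∀ v' ∈ S, v.length = v'.length) :
    #(image₂ (· ++ ·) S T) = #S * #T := by
  refine card_image₂_iff.mpr ?_
  rintro ⟨v, w⟩ hvw ⟨v', w'⟩ hvw' h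
  simp only [Set.mem_prod, mem_coe] at hvw hvw'
  obtain ⟨rfl, rfl⟩ := List.append_inj h (hS v hvw.1 v' hvw'.1)
  rfl

section RandomSubstitution

variable {A : Type*} [DecidableEq A] (θ : A → Finset (List A))

lemma substW_cons (x : A) (u : List A) :
    substW θ (x :: u) = image₂ (· ++ ·) (θ x) (substW θ u) :=
  biUnion_image_left

lemma substW_singleton (x : A) : substW θ [x] = θ x := by
  simp [substW]

lemma substW_append (u v : List A) :
    substW θ (u ++ v) = image₂ (· ++ ·) (substW θ u) (substW θ v) := by
  induction u with
  | nil => simp [substW]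
  | cons x u ih =>
    rw [List.cons_append, substW_cons, substW_cons, ih]
    exact (image₂_assoc (f := (· ++ ·)) (g := (· ++ ·)) (f' := (· ++ ·)) (g' := (· ++ ·))
      List.append_assoc).symm

lemma substIter_succ_singleton (n : ℕ) (x : A) :
    substIter θ (n + 1) [x] = (θ x).biUnion (substIter θ n) := by
  rw [substIter, substW_singleton]

lemma substIter_append (n : ℕ) (u v : List A) :
    substIter θ n (u ++ v) = image₂ (· ++ ·) (substIter θ n u) (substIter θ n v) := by
  induction n generalizing u v with
  | zero => simp [substIter]
  | succ n ih =>
    ext w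
    simp only [substIter, substW_append, mem_biUnion, mem_image₂]
    constructor
    · rintro ⟨_, ⟨p, hp, q, hq, rfl⟩, hw⟩
      obtain ⟨p', hp', q', hq', rfl⟩ := mem_image₂.mp (ih p q ▸ hw)
      exact ⟨p', ⟨p, hp, hp'⟩, q', ⟨q, hq, hq'⟩, rfl⟩
    · rintro ⟨p', ⟨p, hp, hp'⟩, q', ⟨q, hq, hq'⟩, rfl⟩
      exact ⟨p ++ q, ⟨p, hp, q, hq, rfl⟩, ih p q ▸ mem_image₂_of_mem hp' hq'⟩

variable {B : Type*} {π : A → B} {σ : B → List B}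

lemma map_eq_flatMap_of_mem_substW (hθ : ∀ x, ∀ v ∈ θ x, v.map π = σ (π x)) {u w : List A}
    (hw : w ∈ substW θ u) : w.map π = (u.map π).flatMap σ := by
  induction u generalizing w with
  | nil => simp_all [substW]
  | cons x u ih =>
    rw [substW_cons, mem_image₂] at hw
    obtain ⟨v, hv, r, hr, rfl⟩ := hw
    simp [hθ x v hv, ih hr]

lemma map_eq_iterate_of_mem_substIter (hθ : ∀ x, ∀ v ∈ θ x, v.map π = σ (π x)) {n : ℕ}
    {u w : List A} (hw : w ∈ substIter θ n u) :
    w.map π = (fun u => u.flatMap σ)^[n] (u.map π) := by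
  induction n generalizing u with
  | zero => simp_all [substIter]
  | succ n ih =>
    obtain ⟨v, hv, hw⟩ := mem_biUnion.mp hw
    rw [ih hw, map_eq_flatMap_of_mem_substW θ hθ hv, Function.iterate_succ_apply]

lemma length_eq_of_mem_substIter (hθ : ∀ x, ∀ v ∈ θ x, v.map π = σ (π x)) {n : ℕ}
    {u w w' : List A} (hw : w ∈ substIter θ n u) (hw' : w' ∈ substIter θ n u) :
    w.length = w'.length := by
  rw [← List.length_map (f := π), ← List.length_map (f := π) (as := w'),
    map_eq_iterate_of_mem_substIter θ hθ hw, map_eq_iterate_of_mem_substIter θ hθ hw']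

end RandomSubstitution

def fibSubst : Bool → List Bool
  | true => [true, false]
  | false => [true]

def isA : ABC → Bool
  | a => true
  | _ => false

lemma map_isA_of_mem_ϑ (x : ABC) : ∀ v ∈ ϑ x, v.map isA = fibSubst (isA x) := by
  cases x <;> decide

lemma substIter_ϑ_succ_b (n : ℕ) : substIter ϑ (n + 1) [b] = substIter ϑ n [a] := by
  simp [substIter_succ_singleton, ϑ]

lemma substIter_ϑ_succ_c (n : ℕ) : substIter ϑ (n + 1) [c] = substIter ϑ n [a] := by
  simp [substIter_succ_singleton, ϑ]

lemma substIter_ϑ_add_two_a (n : ℕ) :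
    substIter ϑ (n + 2) [a] = image₂ (· ++ ·) (substIter ϑ (n + 1) [a]) (substIter ϑ n [a]) := by
  have hab := substIter_append ϑ (n + 1) [a] [b]
  have hac := substIter_append ϑ (n + 1) [a] [c]
  rw [substIter_ϑ_succ_b] at hab
  rw [substIter_ϑ_succ_c] at hac
  simp only [List.singleton_append] at hab hac
  rw [substIter_succ_singleton, ϑ, biUnion_insert, singleton_biUnion, hab, hac, union_self]

lemma card_substIter_ϑ_a (n : ℕ) : #(substIter ϑ n [a]) = 2 ^ Nat.fib n := by
  induction n using Nat.twoStepInduction with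
  | zero => rfl
  | one => decide
  | more n ih ih' =>
    rw [substIter_ϑ_add_two_a, card_image₂_append_of_length_eq
      fun _ hw _ hw' => length_eq_of_mem_substIter ϑ map_isA_of_mem_ϑ hw hw',
      ih, ih', Nat.fib_add_two, pow_add, mul_comm]

theorem stmt1 : ∀ n : ℕ, 1 ≤ n → (substIter ϑ n [a]).card = 2 ^ Nat.fib n :=
  fun n _ => card_substIter_ϑ_a n
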